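/- arXiv:1612.02024 — 3 statements merged into one kernel-verified Lean document; each statement's English description precedes it below -/
import Mathlib

section
/- Suppose 𝒫₁ is indistinguishable from 𝒫₀ in the weak distance and, symmetrically, 𝒫₀ is indistinguishable from 𝒫₁ in the weak distance. Then every test φ that is a.s. continuous under every distribution in 𝒫 = 𝒫₀ ∪ 𝒫₁ has power equal to size: sup_{Q∈𝒫₁} E_Q[φ] = sup_{P∈𝒫₀} E_P[φ]. -/
/-!
Weak convergence `P_k → Q` of the marginals passes to the `n`-fold products (`ProbabilityMeasure.pi`
is continuous), and the expectation of a test that is continuous `Q^{⊗n}`-a.s. is continuous along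
such a sequence. So every power `E_Q[φ]`, `Q ∈ 𝒫₁`, is a limit of sizes `E_{P_k}[φ]` with
`P_k ∈ 𝒫₀`, and conversely: the two sets of values have the same closure, hence the same supremum.
-/

open MeasureTheory Filter

/-- The distribution of an i.i.d. sample of size `n` from `P`: the `n`-fold product measure. -/
noncomputable def sampleDist (n : ℕ) {E : Type*} [MeasurableSpace E]
    (P : ProbabilityMeasure E) : Measure (Fin n → E) :=
  Measure.pi fun _ => (P : Measure E)

/-- `E_P[φ]`, the rejection probability of the test `φ` under `P^{⊗n}`. -/
noncomputable def tpower (n : ℕ) {E : Type*} [MeasurableSpace E]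
    (P : ProbabilityMeasure E) (φ : (Fin n → E) → ℝ) : ℝ :=
  ∫ z, φ z ∂ sampleDist n P

/-- A test is a measurable function with values in `[0,1]`. -/
def IsTest {E : Type*} [MeasurableSpace E] (φ : E → ℝ) : Prop :=
  Measurable φ ∧ ∀ z, φ z ∈ Set.Icc (0:ℝ) 1

/-- `φ` is almost-surely continuous under `Q` (i.e. under `Q^{⊗n}`). -/
def ASCont {E : Type*} [MeasurableSpace E] [TopologicalSpace E] (n : ℕ)
    (Q : ProbabilityMeasure E) (φ : (Fin n → E) → ℝ) : Prop :=
  sampleDist n Q {z | ¬ ContinuousAt φ z} = 0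

/-- Convergence in distribution: integrals of every bounded continuous function converge. -/
def ConvDM {E : Type*} [MeasurableSpace E] [TopologicalSpace E]
    (P : ℕ → Measure E) (Q : Measure E) : Prop :=
  ∀ g : E → ℝ, Continuous g → (∃ C, ∀ x, |g x| ≤ C) →
    Tendsto (fun k => ∫ x, g x ∂ P k) atTop (nhds (∫ x, g x ∂ Q))

open Set Topology

theorem Real.sSup_eq_sSup_of_subset_closure {s t : Set ℝ} (hst : s ⊆ closure t)
    (hts : t ⊆ closure s) : sSup s = sSup t := by
  have h_ub : upperBounds s = upperBounds t :=
    ((upperBounds_closure s ▸ upperBounds_mono_set hts)).antisymm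
      (upperBounds_closure t ▸ upperBounds_mono_set hst)
  rcases s.eq_empty_or_nonempty with rfl | hs
  · rw [closure_empty, subset_empty_iff] at hts
    rw [hts]
  have ht : t.Nonempty := by
    by_contra! ht
    simpa [ht] using hst hs.some_mem
  by_cases hb : BddAbove s
  · exact ((isLUB_congr h_ub).1 (isLUB_csSup hs hb)).csSup_eq ht |>.symm
  · rw [Real.sSup_of_not_bddAbove hb, Real.sSup_of_not_bddAbove (by rwa [BddAbove, ← h_ub])]

theorem ContinuousAt.mem_frontier_of_mem_frontier_preimage {X Y : Type*} [TopologicalSpace X]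
    [TopologicalSpace Y] {f : X → Y} {x : X} {s : Set Y} (hf : ContinuousAt f x)
    (hx : x ∈ frontier (f ⁻¹' s)) : f x ∈ frontier s := by
  rw [frontier_eq_closure_inter_closure] at hx ⊢
  exact ⟨closure_mono (image_preimage_subset f s) (mem_closure_image hf hx.1),
    closure_mono (image_preimage_subset f sᶜ) (mem_closure_image hf hx.2)⟩

theorem frontier_setOf_le_subset {X : Type*} [TopologicalSpace X] (φ : X → ℝ) (t : ℝ) :
    frontier {z | t ≤ φ z} ⊆ {z | ¬ ContinuousAt φ z} ∪ {z | φ z = t} := by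
  intro z hz
  by_cases hφ : ContinuousAt φ z
  · right
    simpa using hφ.mem_frontier_of_mem_frontier_preimage (s := Ici t) hz
  · exact Or.inl hφ

namespace IsTest

variable {Ω : Type*} [MeasurableSpace Ω] {φ : Ω → ℝ}

theorem integrable (hφ : IsTest φ) (ν : Measure Ω) [IsFiniteMeasure ν] : Integrable φ ν :=
  (integrable_const (1 : ℝ)).mono' hφ.1.aestronglyMeasurable
    (Eventually.of_forall fun z => abs_le.2 ⟨by linarith [(hφ.2 z).1], (hφ.2 z).2⟩)

theorem integral_eq_integral_Ioc_meas_le (hφ : IsTest φ) (ν : Measure Ω) [IsFiniteMeasure ν] :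
    ∫ z, φ z ∂ν = ∫ t in Ioc (0 : ℝ) 1, ν.real {z | t ≤ φ z} :=
  (hφ.integrable ν).integral_eq_integral_Ioc_meas_le (Eventually.of_forall fun z => (hφ.2 z).1)
    (Eventually.of_forall fun z => (hφ.2 z).2)

end IsTest

section Portmanteau

variable {Ω ι : Type*} [MeasurableSpace Ω] [TopologicalSpace Ω] [OpensMeasurableSpace Ω]
  [HasOuterApproxClosed Ω] {L : Filter ι} [L.IsCountablyGenerated]
  {μs : ι → ProbabilityMeasure Ω} {μ : ProbabilityMeasure Ω}

/-- The layer-cake formula writes `∫ φ dν` as `∫₀¹ ν {t ≤ φ} dt`. For all but countably many `t`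
the level set `{φ = t}` is `μ`-null, and then so is the frontier of `{t ≤ φ}`, so the portmanteau
theorem gives convergence of the integrand; dominated convergence concludes. -/
theorem tendsto_integral_of_tendsto_of_ae_continuousAt (hμs : Tendsto μs L (𝓝 μ)) {φ : Ω → ℝ}
    (hφ : IsTest φ) (hcont : (μ : Measure Ω) {z | ¬ ContinuousAt φ z} = 0) :
    Tendsto (fun i => ∫ z, φ z ∂(μs i : Measure Ω)) L (𝓝 (∫ z, φ z ∂(μ : Measure Ω))) := by
  simp only [hφ.integral_eq_integral_Ioc_meas_le]
  have h_atoms : {t : ℝ | 0 < (μ : Measure Ω) {z | φ z = t}}.Countable :=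
    Measure.countable_meas_level_set_pos hφ.1
  refine tendsto_integral_filter_of_dominated_convergence (fun _ => 1) ?_ ?_ ?_ ?_
  · refine Eventually.of_forall fun i =>
      (Antitone.measurable fun s t hst => ?_).aestronglyMeasurable
    exact measureReal_mono fun z hz => hst.trans hz
  · exact Eventually.of_forall fun i => Eventually.of_forall fun t => by simp
  · exact integrableOn_const (by simp)
  · refine ae_restrict_of_ae ((h_atoms.ae_notMem volume).mono fun t ht => ?_)
    have h_null : (μ : Measure Ω) (frontier {z | t ≤ φ z}) = 0 :=
      measure_mono_null (frontier_setOf_le_subset φ t)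
        (measure_union_null hcont (by simpa using ht))
    exact (ENNReal.tendsto_toReal (measure_ne_top _ _)).comp
      (ProbabilityMeasure.tendsto_measure_of_null_frontier_of_tendsto' hμs h_null)

end Portmanteau

theorem ConvDM.tendsto {E : Type*} [MeasurableSpace E] [TopologicalSpace E]
    [OpensMeasurableSpace E] {P : ℕ → ProbabilityMeasure E} {Q : ProbabilityMeasure E}
    (h : ConvDM (fun k => (P k : Measure E)) (Q : Measure E)) : Tendsto P atTop (𝓝 Q) :=
  ProbabilityMeasure.tendsto_iff_forall_integral_tendsto.2 fun g =>
    h g g.continuous ⟨‖g‖, fun x => by simpa using g.norm_coe_le_norm x⟩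

section SampleDist

variable {E : Type*} [MeasurableSpace E] [TopologicalSpace E] [SecondCountableTopology E]
  [TopologicalSpace.PseudoMetrizableSpace E] [OpensMeasurableSpace E]

theorem ProbabilityMeasure.tendsto_pi_of_tendsto {P : ℕ → ProbabilityMeasure E}
    {Q : ProbabilityMeasure E} (hP : Tendsto P atTop (𝓝 Q)) (n : ℕ) :
    Tendsto (fun k => ProbabilityMeasure.pi fun _ : Fin n => P k) atTop
      (𝓝 (ProbabilityMeasure.pi fun _ : Fin n => Q)) :=
  (ProbabilityMeasure.continuous_pi.tendsto _).comp (tendsto_pi_nhds.2 fun _ => hP)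

theorem ConvDM.tendsto_tpower {n : ℕ} {P : ℕ → ProbabilityMeasure E} {Q : ProbabilityMeasure E}
    (h : ConvDM (fun k => (P k : Measure E)) (Q : Measure E)) {φ : (Fin n → E) → ℝ}
    (hφ : IsTest φ) (hQ : ASCont n Q φ) :
    Tendsto (fun k => tpower n (P k) φ) atTop (𝓝 (tpower n Q φ)) :=
  tendsto_integral_of_tendsto_of_ae_continuousAt
    (ProbabilityMeasure.tendsto_pi_of_tendsto h.tendsto n) hφ hQ

theorem image_tpower_subset_closure {n : ℕ} {𝒜 ℬ : Set (ProbabilityMeasure E)}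
    (h_approx : ∀ Q ∈ 𝒜, ∃ P : ℕ → ProbabilityMeasure E, (∀ k, P k ∈ ℬ) ∧
      ConvDM (fun k => (P k : Measure E)) (Q : Measure E))
    {φ : (Fin n → E) → ℝ} (hφ : IsTest φ) (hcont : ∀ Q ∈ 𝒜, ASCont n Q φ) :
    (fun Q => tpower n Q φ) '' 𝒜 ⊆ closure ((fun P => tpower n P φ) '' ℬ) := by
  rintro _ ⟨Q, hQ, rfl⟩
  obtain ⟨P, hPℬ, hPQ⟩ := h_approx Q hQ
  exact mem_closure_of_tendsto (hPQ.tendsto_tpower hφ (hcont Q hQ))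
    (Eventually.of_forall fun k => mem_image_of_mem _ (hPℬ k))

end SampleDist

theorem power_equals_size_of_bidirectional_indistinguishable_general (l n : ℕ)
    (𝒫₀ 𝒫₁ : Set (ProbabilityMeasure (Fin l → ℝ)))
    (hindist₁ : ∀ Q ∈ 𝒫₁, ∃ P : ℕ → ProbabilityMeasure (Fin l → ℝ), (∀ k, P k ∈ 𝒫₀) ∧
      ConvDM (fun k => (P k : Measure (Fin l → ℝ))) (Q : Measure (Fin l → ℝ)))
    (hindist₀ : ∀ P ∈ 𝒫₀, ∃ Q : ℕ → ProbabilityMeasure (Fin l → ℝ), (∀ k, Q k ∈ 𝒫₁) ∧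
      ConvDM (fun k => (Q k : Measure (Fin l → ℝ))) (P : Measure (Fin l → ℝ)))
    (φ : (Fin n → Fin l → ℝ) → ℝ) (hφ : IsTest φ)
    (hcont : ∀ Q ∈ 𝒫₀ ∪ 𝒫₁, ASCont n Q φ) :
    sSup ((fun Q => tpower n Q φ) '' 𝒫₁) = sSup ((fun P => tpower n P φ) '' 𝒫₀) :=
  Real.sSup_eq_sSup_of_subset_closure
    (image_tpower_subset_closure hindist₁ hφ fun Q hQ => hcont Q (Or.inr hQ))
    (image_tpower_subset_closure hindist₀ hφ fun P hP => hcont P (Or.inl hP))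

/-- Remark 4: if `𝒫₁` is indistinguishable from `𝒫₀` and vice versa in
the weak distance, then every test a.s. continuous under every distribution in `𝒫₀ ∪ 𝒫₁`
has power equal to size. -/
theorem power_equals_size_of_bidirectional_indistinguishable (l n : ℕ) (hl : 1 ≤ l) (hn : 1 ≤ n)
    (𝒫₀ 𝒫₁ : Set (ProbabilityMeasure (Fin l → ℝ)))
    (hindist₁ : ∀ Q ∈ 𝒫₁, ∃ P : ℕ → ProbabilityMeasure (Fin l → ℝ), (∀ k, P k ∈ 𝒫₀) ∧
      ConvDM (fun k => (P k : Measure (Fin l → ℝ))) (Q : Measure (Fin l → ℝ)))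
    (hindist₀ : ∀ P ∈ 𝒫₀, ∃ Q : ℕ → ProbabilityMeasure (Fin l → ℝ), (∀ k, Q k ∈ 𝒫₁) ∧
      ConvDM (fun k => (Q k : Measure (Fin l → ℝ))) (P : Measure (Fin l → ℝ)))
    (φ : (Fin n → Fin l → ℝ) → ℝ) (hφ : IsTest φ)
    (hcont : ∀ Q ∈ 𝒫₀ ∪ 𝒫₁, ASCont n Q φ) :
    sSup ((fun Q => tpower n Q φ) '' 𝒫₁) = sSup ((fun P => tpower n P φ) '' 𝒫₀) :=
  power_equals_size_of_bidirectional_indistinguishable_general l n 𝒫₀ 𝒫₁ hindist₁ hindist₀ φ hφ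
    hcont
end

section
/- Suppose that for every m ∈ μ(𝒫), 𝒫₁(m) is indistinguishable from 𝒫₀(m) in the weak distance and the test φ_m is a.s. continuous under every Q ∈ 𝒫₁(m), and μ(𝒫) is an unbounded subset of ℝ. If the confidence set C(Z) = {m : φ_m(Z)=0} is almost-surely bounded under some distribution P* ∈ 𝒫, then C has zero confidence level, i.e., inf_{P∈𝒫} P^{⊗n}(μ(P) ∈ C(Z)) = 0; equivalently, sup_{m∈μ(𝒫)} sup_{P∈𝒫₀(m)} E_P[φ_m] = 1, so there exist m for which the size of φ_m is arbitrarily close to one. -/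
open MeasureTheory Filter

/-!
Since `C(Z)` is `P*`-almost surely bounded, a parameter `m₀ ∈ μ(𝔓)` far enough out lies in
`C(Z)` with `P*`-probability below any given `ε`. Choosing `m₀ ≠ μ(P*)`, indistinguishability gives
`P_k ∈ 𝔓₀(m₀)` converging weakly to `P*`; then `P_k^{⊗n} → P*^{⊗n}` weakly, and `{φ_{m₀} = 0}` is a
`P*^{⊗n}`-continuity set because its frontier consists of discontinuity points of `φ_{m₀}`. Hence
`P_k^{⊗n}(m₀ ∈ C(Z)) < ε` for large `k`: the coverage of `C` at `P_k` is below `ε` and the size of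
`φ_{m₀}` exceeds `1 - ε`.
-/

open scoped ENNReal Topology

section SampleDist

variable {E : Type*} [MeasurableSpace E]

instance (n : ℕ) (P : ProbabilityMeasure E) : IsProbabilityMeasure (sampleDist n P) := by
  unfold sampleDist
  infer_instance

lemma tpower_eq_one_sub {n : ℕ} (P : ProbabilityMeasure E) {φ : (Fin n → E) → ℝ}
    (hφ : Measurable φ) (h01 : ∀ z, φ z = 0 ∨ φ z = 1) :
    tpower n P φ = 1 - (sampleDist n P {z | φ z = 0}).toReal := by
  have hind : φ = {z | φ z = 0}ᶜ.indicator 1 := by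
    ext z
    rcases h01 z with h | h <;> simp [h]
  have hmeas : MeasurableSet {z | φ z = 0} := hφ (measurableSet_singleton 0)
  rw [tpower, hind, integral_indicator_one hmeas.compl, probReal_compl_eq_one_sub hmeas,
    ← hind, measureReal_def]

lemma tpower_le_one {n : ℕ} (P : ProbabilityMeasure E) {φ : (Fin n → E) → ℝ}
    (hφ : Measurable φ) (h01 : ∀ z, φ z = 0 ∨ φ z = 1) : tpower n P φ ≤ 1 := by
  rw [tpower_eq_one_sub P hφ h01]
  linarith [ENNReal.toReal_nonneg (a := sampleDist n P {z | φ z = 0})]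

variable [TopologicalSpace E] [OpensMeasurableSpace E]

lemma tendsto_of_convDM {P : ℕ → ProbabilityMeasure E} {Q : ProbabilityMeasure E}
    (h : ConvDM (fun k => (P k : Measure E)) Q) : Tendsto P atTop (𝓝 Q) :=
  ProbabilityMeasure.tendsto_iff_forall_integral_tendsto.2 fun g =>
    h g g.continuous ⟨‖g‖, fun x => g.norm_coe_le_norm x⟩

lemma tendsto_sampleDist_apply_of_null_frontier [SecondCountableTopology E]
    [TopologicalSpace.PseudoMetrizableSpace E] {n : ℕ} {ι : Type*} {L : Filter ι}
    {P : ι → ProbabilityMeasure E} {Q : ProbabilityMeasure E} (hPQ : Tendsto P L (𝓝 Q))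
    {s : Set (Fin n → E)} (hs : sampleDist n Q (frontier s) = 0) :
    Tendsto (fun i => sampleDist n (P i) s) L (𝓝 (sampleDist n Q s)) :=
  have hpi : Tendsto (fun i => ProbabilityMeasure.pi fun _ : Fin n => P i) L
      (𝓝 (ProbabilityMeasure.pi fun _ => Q)) :=
    (ProbabilityMeasure.continuous_pi.tendsto _).comp (tendsto_pi_nhds.2 fun _ => hPQ)
  ProbabilityMeasure.tendsto_measure_of_null_frontier_of_tendsto' hpi hs

end SampleDist

lemma frontier_setOf_eq_zero_subset {X : Type*} [TopologicalSpace X] {f : X → ℝ}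
    (h01 : ∀ x, f x = 0 ∨ f x = 1) : frontier {x | f x = 0} ⊆ {x | ¬ ContinuousAt f x} := by
  intro x hx hcont
  have hloc : ∀ᶠ y in 𝓝 x, f y = f x := by
    filter_upwards [hcont (Metric.ball_mem_nhds (f x) one_half_pos)] with y hy
    rw [Set.mem_preimage, Metric.mem_ball, Real.dist_eq] at hy
    rcases h01 x with hx' | hx' <;> rcases h01 y with hy' | hy' <;>
      simp only [hx', hy'] at hy ⊢ <;> norm_num at hy
  rcases h01 x with hx0 | hx1
  · exact hx.2 (mem_interior_iff_mem_nhds.2 (hloc.mono fun y hy => hy.trans hx0))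
  · refine (mem_closure_iff_nhds.1 hx.1 _ hloc).elim fun y ⟨hyx, hy0⟩ => ?_
    simp_all

lemma exists_forall_lt_abs_measure_lt_of_ae_isBounded {Ω : Type*} [MeasurableSpace Ω]
    (ν : Measure Ω) [IsFiniteMeasure ν] {C : Ω → Set ℝ}
    (hC : ∀ᵐ z ∂ν, Bornology.IsBounded (C z)) (hmeas : ∀ m, MeasurableSet {z | m ∈ C z})
    {ε : ℝ≥0∞} (hε : 0 < ε) : ∃ R : ℝ, ∀ m, R < |m| → ν {z | m ∈ C z} < ε := by
  set T : ℕ → Set Ω := fun M => {z | ∀ m ∈ C z, |m| ≤ M}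
  have hT : Monotone T := fun M M' hMM' z hz m hm =>
    (hz m hm).trans (Nat.cast_le.2 hMM')
  have hTunion : ν (⋃ M, T M) = ν Set.univ := by
    refine le_antisymm (measure_mono (Set.subset_univ _)) ?_
    calc ν Set.univ = ν {z | Bornology.IsBounded (C z)} := (measure_congr (ae_eq_univ.2 hC)).symm
      _ ≤ ν (⋃ M, T M) := measure_mono fun z hz => by
        obtain ⟨R, hR⟩ := (Metric.isBounded_iff_subset_closedBall (0 : ℝ)).1 hz
        refine Set.mem_iUnion.2 ⟨⌈R⌉₊, fun m hm => ?_⟩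
        simpa using (mem_closedBall_zero_iff.1 (hR hm)).trans (Nat.le_ceil R)
  -- `T M` need not be measurable, hence the bound `ν univ - ν (T M)` in place of `ν (T M)ᶜ`
  have hlim : Tendsto (fun M => ν Set.univ - ν (T M)) atTop (𝓝 0) := by
    have := ENNReal.Tendsto.sub (tendsto_const_nhds (x := ν Set.univ))
      (tendsto_measure_iUnion_atTop (μ := ν) hT) (Or.inl (measure_ne_top ν _))
    rwa [hTunion, tsub_self] at this
  obtain ⟨M, hM⟩ := (hlim.eventually (gt_mem_nhds hε)).exists
  refine ⟨M, fun m hm => lt_of_le_of_lt ?_ hM⟩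
  have hdisj : Disjoint {z | m ∈ C z} (T M) :=
    Set.disjoint_left.2 fun z hz hzT => (hzT m hz).not_gt hm
  refine ENNReal.le_sub_of_add_le_right (measure_ne_top ν _) ?_
  rw [← measure_union' hdisj (hmeas m)]
  exact measure_mono (Set.subset_univ _)

lemma exists_mem_sampleDist_setOf_eq_zero_lt {E : Type*} [MeasurableSpace E]
    [TopologicalSpace E] [OpensMeasurableSpace E] [SecondCountableTopology E]
    [TopologicalSpace.PseudoMetrizableSpace E] {n : ℕ} {𝔓 : Set (ProbabilityMeasure E)}
    {μ : ProbabilityMeasure E → ℝ} {φ : ℝ → (Fin n → E) → ℝ}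
    (hφ : ∀ m, Measurable (φ m) ∧ ∀ z, φ m z = 0 ∨ φ m z = 1)
    (hindist : ∀ m ∈ μ '' 𝔓, ∀ Q ∈ 𝔓, μ Q ≠ m →
      ∃ P : ℕ → ProbabilityMeasure E, (∀ k, P k ∈ 𝔓 ∧ μ (P k) = m) ∧
        ConvDM (fun k => (P k : Measure E)) (Q : Measure E))
    (hcont : ∀ m ∈ μ '' 𝔓, ∀ Q ∈ 𝔓, μ Q ≠ m → ASCont n Q (φ m))
    (hunb : ¬ Bornology.IsBounded (μ '' 𝔓))
    (hbdd : ∃ Pstar ∈ 𝔓,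
      sampleDist n Pstar {z | ¬ Bornology.IsBounded {m | m ∈ μ '' 𝔓 ∧ φ m z = 0}} = 0)
    {ε : ℝ≥0∞} (hε : 0 < ε) : ∃ P ∈ 𝔓, sampleDist n P {z | φ (μ P) z = 0} < ε := by
  obtain ⟨Pstar, hPstar, hnull⟩ := hbdd
  obtain ⟨R, hR⟩ := exists_forall_lt_abs_measure_lt_of_ae_isBounded (sampleDist n Pstar)
    (C := fun z => {m | m ∈ μ '' 𝔓 ∧ φ m z = 0}) (ae_iff.2 hnull)
    (fun m => (MeasurableSet.const _).inter ((hφ m).1 (measurableSet_singleton 0))) hε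
  obtain ⟨m₀, hm₀, hm₀R⟩ : ∃ m₀ ∈ μ '' 𝔓, max R |μ Pstar| < |m₀| := by
    rw [isBounded_iff_forall_norm_le] at hunb
    push Not at hunb
    simpa only [Real.norm_eq_abs] using hunb (max R |μ Pstar|)
  have hne : μ Pstar ≠ m₀ := fun h => by
    rw [h] at hm₀R
    exact (le_max_right R _).not_gt hm₀R
  have hPstar_lt : sampleDist n Pstar {z | φ m₀ z = 0} < ε := by
    simpa only [Set.mem_ofPred_eq, hm₀, true_and] using hR m₀ ((le_max_left _ _).trans_lt hm₀R)
  obtain ⟨P, hP, hconv⟩ := hindist m₀ hm₀ Pstar hPstar hne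
  have hlim := tendsto_sampleDist_apply_of_null_frontier (tendsto_of_convDM hconv)
    (measure_mono_null (frontier_setOf_eq_zero_subset (hφ m₀).2) (hcont m₀ hm₀ Pstar hPstar hne))
  obtain ⟨k, hk⟩ := (hlim.eventually (gt_mem_nhds hPstar_lt)).exists
  exact ⟨P k, (hP k).1, by rwa [(hP k).2]⟩

theorem as_bounded_confidence_set_has_zero_level_general (l n : ℕ)
    (𝔓 : Set (ProbabilityMeasure (Fin l → ℝ)))
    (μ : ProbabilityMeasure (Fin l → ℝ) → ℝ)
    (φ : ℝ → (Fin n → Fin l → ℝ) → ℝ)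
    (hφ : ∀ m, Measurable (φ m) ∧ ∀ z, φ m z = 0 ∨ φ m z = 1)
    (hindist : ∀ m ∈ μ '' 𝔓, ∀ Q ∈ 𝔓, μ Q ≠ m →
      ∃ P : ℕ → ProbabilityMeasure (Fin l → ℝ), (∀ k, P k ∈ 𝔓 ∧ μ (P k) = m) ∧
        ConvDM (fun k => (P k : Measure (Fin l → ℝ))) (Q : Measure (Fin l → ℝ)))
    (hcont : ∀ m ∈ μ '' 𝔓, ∀ Q ∈ 𝔓, μ Q ≠ m → ASCont n Q (φ m))
    (hunb : ¬ Bornology.IsBounded (μ '' 𝔓))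
    (hbdd : ∃ Pstar ∈ 𝔓,
      sampleDist n Pstar {z | ¬ Bornology.IsBounded {m | m ∈ μ '' 𝔓 ∧ φ m z = 0}} = 0) :
    sInf ((fun P => (sampleDist n P {z | μ P ∈ μ '' 𝔓 ∧ φ (μ P) z = 0}).toReal) '' 𝔓) = 0 ∧
    sSup ((fun m => sSup ((fun P => tpower n P (φ m)) '' {P ∈ 𝔓 | μ P = m}))
        '' (μ '' 𝔓)) = 1 := by
  have h𝔓 : 𝔓.Nonempty := let ⟨P, hP, _⟩ := hbdd; ⟨P, hP⟩
  have hsmall : ∀ w : ℝ, 0 < w → ∃ P ∈ 𝔓, (sampleDist n P {z | φ (μ P) z = 0}).toReal < w :=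
    fun w hw =>
      let ⟨P, hP, hPw⟩ := exists_mem_sampleDist_setOf_eq_zero_lt hφ hindist hcont hunb hbdd
        (ENNReal.ofReal_pos.2 hw)
      ⟨P, hP, ENNReal.toReal_lt_of_lt_ofReal hPw⟩
  have hsize_le : ∀ m P, tpower n P (φ m) ≤ 1 := fun m P => tpower_le_one P (hφ m).1 (hφ m).2
  constructor
  · refine csInf_eq_of_forall_ge_of_forall_gt_exists_lt (h𝔓.image _)
      (by rintro _ ⟨P, -, rfl⟩; exact ENNReal.toReal_nonneg) fun w hw => ?_
    obtain ⟨P, hP, hPw⟩ := hsmall w hw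
    exact ⟨_, ⟨P, hP, rfl⟩, by simpa [Set.mem_image_of_mem μ hP] using hPw⟩
  · refine csSup_eq_of_forall_le_of_forall_lt_exists_gt ((h𝔓.image μ).image _) ?_ fun w hw => ?_
    · rintro _ ⟨m, -, rfl⟩
      exact Real.sSup_le (by rintro _ ⟨P, -, rfl⟩; exact hsize_le m P) zero_le_one
    obtain ⟨P, hP, hPw⟩ := hsmall (1 - w) (by linarith)
    refine ⟨_, ⟨μ P, ⟨P, hP, rfl⟩, rfl⟩, ?_⟩
    calc w < tpower n P (φ (μ P)) := by
          rw [tpower_eq_one_sub P (hφ _).1 (hφ _).2]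
          linarith
      _ ≤ sSup ((fun Q => tpower n Q (φ (μ P))) '' {Q ∈ 𝔓 | μ Q = μ P}) :=
          le_csSup ⟨1, by rintro _ ⟨Q, -, rfl⟩; exact hsize_le _ Q⟩ ⟨P, ⟨hP, rfl⟩, rfl⟩

/-- Remark 5, contrapositive of Theorem 2: if `μ(𝔓)` is unbounded and
the inverted confidence set is almost-surely bounded under some `P* ∈ 𝔓`, then the
confidence set has zero confidence level, and equivalently the supremum of the sizes of the
tests `φ m` over `m ∈ μ(𝔓)` equals one. -/
theorem as_bounded_confidence_set_has_zero_level (l n : ℕ) (hl : 1 ≤ l) (hn : 1 ≤ n)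
    (𝔓 : Set (ProbabilityMeasure (Fin l → ℝ)))
    (μ : ProbabilityMeasure (Fin l → ℝ) → ℝ)
    (φ : ℝ → (Fin n → Fin l → ℝ) → ℝ)
    (hφ : ∀ m, Measurable (φ m) ∧ ∀ z, φ m z = 0 ∨ φ m z = 1)
    (hindist : ∀ m ∈ μ '' 𝔓, ∀ Q ∈ 𝔓, μ Q ≠ m →
      ∃ P : ℕ → ProbabilityMeasure (Fin l → ℝ), (∀ k, P k ∈ 𝔓 ∧ μ (P k) = m) ∧
        ConvDM (fun k => (P k : Measure (Fin l → ℝ))) (Q : Measure (Fin l → ℝ)))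
    (hcont : ∀ m ∈ μ '' 𝔓, ∀ Q ∈ 𝔓, μ Q ≠ m → ASCont n Q (φ m))
    (hunb : ¬ Bornology.IsBounded (μ '' 𝔓))
    (hbdd : ∃ Pstar ∈ 𝔓,
      sampleDist n Pstar {z | ¬ Bornology.IsBounded {m | m ∈ μ '' 𝔓 ∧ φ m z = 0}} = 0) :
    sInf ((fun P => (sampleDist n P {z | μ P ∈ μ '' 𝔓 ∧ φ (μ P) z = 0}).toReal) '' 𝔓) = 0 ∧
    sSup ((fun m => sSup ((fun P => tpower n P (φ m)) '' {P ∈ 𝔓 | μ P = m}))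
        '' (μ '' 𝔓)) = 1 :=
  as_bounded_confidence_set_has_zero_level_general l n 𝔓 μ φ hφ hindist hcont hunb hbdd
end

section
/- (Regression Discontinuity Design, testing impossibility.) For every m ∈ ℝ, any test φ_m of H₀ : μ(P) = m against H₁ : μ(P) ≠ m that is a.s. continuous under every Q ∈ 𝒫₁(m) has power limited by size: sup_{Q∈𝒫₁(m)} E_Q[φ_m] ≤ sup_{P∈𝒫₀(m)} E_P[φ_m]. -/
open MeasureTheory Filter Set

/-- Membership in the class `𝒢`: `g` is bounded, continuous at every `x ≠ c`, with finite
one-sided limits `gp = g(c+)` and `gm = g(c−)` at the cutoff `c`. -/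
def JumpFun (c : ℝ) (g : ℝ → ℝ) (gp gm : ℝ) : Prop :=
  (∃ C, ∀ x, |g x| ≤ C) ∧ (∀ x : ℝ, x ≠ c → ContinuousAt g x) ∧
  Tendsto g (nhdsWithin c (Ioi c)) (nhds gp) ∧
  Tendsto g (nhdsWithin c (Iio c)) (nhds gm)

/-- The forcing variable `X = z.2` is continuously distributed with a continuous density `f`
and the cutoff `c` lies in the interior of the support of the density. -/
def XCont (c : ℝ) (P : ProbabilityMeasure (ℝ × ℝ)) (f : ℝ → ℝ) : Prop :=
  Continuous f ∧ (∀ x, 0 ≤ f x) ∧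
  (P : Measure (ℝ × ℝ)).map Prod.snd
    = MeasureTheory.volume.withDensity (fun x => ENNReal.ofReal (f x)) ∧
  c ∈ interior {x | 0 < f x}

/-- `E_P[Y | X] = g(X)` `P`-almost surely, expressed via the defining property of
conditional expectations, together with integrability of `Y = z.1`. -/
def CondMeanEq (P : ProbabilityMeasure (ℝ × ℝ)) (g : ℝ → ℝ) : Prop :=
  Integrable (fun z : ℝ × ℝ => z.1) (P : Measure (ℝ × ℝ)) ∧
  ∀ B : Set ℝ, MeasurableSet B →
    ∫ z in {z : ℝ × ℝ | z.2 ∈ B}, z.1 ∂(P : Measure (ℝ × ℝ))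
      = ∫ z in {z : ℝ × ℝ | z.2 ∈ B}, g z.2 ∂(P : Measure (ℝ × ℝ))

/-- The family `𝒫` of sharp RDD models: `(Y,X) ∼ P` with `X` continuously distributed,
`c` interior to its support, and conditional mean in the class `𝒢`. -/
def MemRDD (c : ℝ) (P : ProbabilityMeasure (ℝ × ℝ)) : Prop :=
  (∃ f, XCont c P f) ∧ ∃ g gp gm, JumpFun c g gp gm ∧ CondMeanEq P g

/-!
Every alternative is a limit of null models that the test cannot tell apart from it. If `Q` has
conditional mean `g` with jump `gp - gm ≠ m`, replace `Y` by `Y + d · r_k(X)` with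
`d = gp - gm - m`, where `r_k` is a continuous ramp rising from `0` at `c - 1/k` to `1` at `c⁻`
and vanishing on `[c, ∞)`. This leaves the law of `X` unchanged and moves the conditional mean
to `g + d · r_k`, whose jump is `m`. As `k → ∞` the perturbation tends to `0` pointwise, so the
perturbed samples converge pointwise to the original ones; since `φ` is continuous
`Q^{⊗n}`-a.s., dominated convergence makes the null rejection probabilities converge to the
power at `Q`.
-/

open Topology

noncomputable def leftRamp (c : ℝ) (k : ℕ) (x : ℝ) : ℝ :=
  if x < c then max 0 (1 - k * (c - x)) else 0

section leftRamp

variable (c : ℝ) (k : ℕ)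

lemma measurable_leftRamp : Measurable (leftRamp c k) :=
  Measurable.ite (measurableSet_lt measurable_id measurable_const) (by fun_prop) measurable_const

lemma abs_leftRamp_le_one (x : ℝ) : |leftRamp c k x| ≤ 1 := by
  unfold leftRamp
  split_ifs with hx
  · have : 0 ≤ (k : ℝ) * (c - x) := mul_nonneg k.cast_nonneg (by linarith)
    rw [abs_of_nonneg (le_max_left _ _)]
    exact max_le zero_le_one (by linarith)
  · simp

lemma leftRamp_eq_zero_of_le {x : ℝ} (hx : c ≤ x) : leftRamp c k x = 0 :=
  if_neg hx.not_gt

lemma jumpFun_leftRamp : JumpFun c (leftRamp c k) 0 1 := by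
  have hlin : Continuous fun x : ℝ => max 0 (1 - k * (c - x)) := by fun_prop
  have hleft : leftRamp c k =ᶠ[𝓝[<] c] fun x => max 0 (1 - k * (c - x)) :=
    eventually_nhdsWithin_of_forall fun x hx => if_pos hx
  have hright : leftRamp c k =ᶠ[𝓝[>] c] fun _ => 0 :=
    eventually_nhdsWithin_of_forall fun x hx => leftRamp_eq_zero_of_le c k (le_of_lt hx)
  refine ⟨⟨1, abs_leftRamp_le_one c k⟩, fun x hx => ?_, ?_, ?_⟩
  · rcases hx.lt_or_gt with hx | hx
    · exact hlin.continuousAt.congr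
        (eventually_of_mem (Iio_mem_nhds hx) fun y hy => (if_pos hy).symm)
    · exact continuousAt_const.congr (eventually_of_mem (Ioi_mem_nhds hx)
        fun y hy => (leftRamp_eq_zero_of_le c k (le_of_lt hy)).symm)
  · exact tendsto_const_nhds.congr' hright.symm
  · have := (hlin.tendsto c).mono_left (nhdsWithin_le_nhds (s := Iio c))
    simpa using this.congr' hleft.symm

lemma tendsto_leftRamp_atTop (x : ℝ) : Tendsto (fun k => leftRamp c k x) atTop (𝓝 0) := by
  rcases lt_or_ge x c with hx | hx
  · obtain ⟨K, hK⟩ := exists_nat_gt (1 / (c - x))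
    refine tendsto_const_nhds.congr' (eventually_atTop.2 ⟨K, fun k hk => ?_⟩)
    have : 1 ≤ (k : ℝ) * (c - x) := by
      rw [div_lt_iff₀ (by linarith)] at hK
      nlinarith [(Nat.cast_le (α := ℝ)).2 hk]
    simp [leftRamp, hx, this]
  · simp [leftRamp_eq_zero_of_le c _ hx]

end leftRamp

namespace JumpFun

variable {c : ℝ} {g h : ℝ → ℝ} {gp gm hp hm : ℝ}

lemma measurable (hg : JumpFun c g gp gm) : Measurable g :=
  measurable_of_measurable_on_compl_singleton c
    (ContinuousOn.domRestrict fun x hx => (hg.2.1 x hx).continuousWithinAt).measurable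

lemma integrable_comp {α : Type*} [MeasurableSpace α] {ν : Measure α} [IsFiniteMeasure ν]
    {X : α → ℝ} (hg : JumpFun c g gp gm) (hX : Measurable X) :
    Integrable (fun a => g (X a)) ν :=
  let ⟨C, hC⟩ := hg.1
  .of_bound (hg.measurable.comp hX).aestronglyMeasurable C (ae_of_all _ fun a => hC (X a))

lemma add (hg : JumpFun c g gp gm) (hh : JumpFun c h hp hm) :
    JumpFun c (fun x => g x + h x) (gp + hp) (gm + hm) :=
  let ⟨C, hC⟩ := hg.1
  let ⟨D, hD⟩ := hh.1
  ⟨⟨C + D, fun x => (abs_add_le _ _).trans (add_le_add (hC x) (hD x))⟩,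
    fun x hx => (hg.2.1 x hx).add (hh.2.1 x hx), hg.2.2.1.add hh.2.2.1, hg.2.2.2.add hh.2.2.2⟩

lemma const_mul (hg : JumpFun c g gp gm) (d : ℝ) :
    JumpFun c (fun x => d * g x) (d * gp) (d * gm) :=
  let ⟨C, hC⟩ := hg.1
  ⟨⟨|d| * C, fun x => by rw [abs_mul]; exact mul_le_mul_of_nonneg_left (hC x) (abs_nonneg d)⟩,
    fun x hx => (hg.2.1 x hx).const_mul d, hg.2.2.1.const_mul d, hg.2.2.2.const_mul d⟩

end JumpFun

def shiftFst (b : ℝ → ℝ) (z : ℝ × ℝ) : ℝ × ℝ := (z.1 + b z.2, z.2)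

section shiftFst

variable {b : ℝ → ℝ} {P : ProbabilityMeasure (ℝ × ℝ)}

lemma measurable_shiftFst (hb : Measurable b) : Measurable (shiftFst b) :=
  (measurable_fst.add (hb.comp measurable_snd)).prodMk measurable_snd

lemma XCont.map_shiftFst {c : ℝ} {f : ℝ → ℝ} (hP : XCont c P f) (hb : Measurable b) :
    XCont c (P.map (measurable_shiftFst hb).aemeasurable) f := by
  refine ⟨hP.1, hP.2.1, ?_, hP.2.2.2⟩
  rw [ProbabilityMeasure.toMeasure_map,
    Measure.map_map measurable_snd (measurable_shiftFst hb)]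
  exact hP.2.2.1

lemma CondMeanEq.map_shiftFst {g : ℝ → ℝ} (hP : CondMeanEq P g) (hg : Measurable g)
    (hgi : Integrable (fun z => g z.2) (P : Measure (ℝ × ℝ))) (hb : Measurable b)
    (hbi : Integrable (fun z => b z.2) (P : Measure (ℝ × ℝ))) :
    CondMeanEq (P.map (measurable_shiftFst hb).aemeasurable) fun x => g x + b x := by
  have hT := (measurable_shiftFst hb).aemeasurable (μ := (P : Measure (ℝ × ℝ)))
  rw [CondMeanEq, ProbabilityMeasure.toMeasure_map,
    integrable_map_measure measurable_fst.aestronglyMeasurable hT]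
  refine ⟨hP.1.add hbi, fun B hB => ?_⟩
  have hS : MeasurableSet {z : ℝ × ℝ | z.2 ∈ B} := measurable_snd hB
  rw [setIntegral_map hS measurable_fst.aestronglyMeasurable hT,
    setIntegral_map (f := fun z : ℝ × ℝ => g z.2 + b z.2) hS
      ((hg.comp measurable_snd).add (hb.comp measurable_snd)).aestronglyMeasurable hT]
  change ∫ z in {z : ℝ × ℝ | z.2 ∈ B}, (z.1 + b z.2) ∂(P : Measure (ℝ × ℝ))
    = ∫ z in {z : ℝ × ℝ | z.2 ∈ B}, (g z.2 + b z.2) ∂(P : Measure (ℝ × ℝ))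
  rw [integral_add hP.1.integrableOn hbi.integrableOn,
    integral_add hgi.integrableOn hbi.integrableOn, hP.2 B hB]

end shiftFst

noncomputable def rampShift (Q : ProbabilityMeasure (ℝ × ℝ)) (c d : ℝ) (k : ℕ) :
    ProbabilityMeasure (ℝ × ℝ) :=
  Q.map (measurable_shiftFst ((measurable_leftRamp c k).const_mul d)).aemeasurable

lemma memRDD_rampShift {c : ℝ} {Q : ProbabilityMeasure (ℝ × ℝ)} {f g : ℝ → ℝ}
    {gp gm : ℝ} (hf : XCont c Q f) (hg : JumpFun c g gp gm) (hQg : CondMeanEq Q g)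
    (d : ℝ) (k : ℕ) :
    MemRDD c (rampShift Q c d k) ∧
      JumpFun c (fun x => g x + d * leftRamp c k x) gp (gm + d) ∧
      CondMeanEq (rampShift Q c d k) (fun x => g x + d * leftRamp c k x) := by
  have hr := (jumpFun_leftRamp c k).const_mul d
  have hjump : JumpFun c (fun x => g x + d * leftRamp c k x) gp (gm + d) := by
    simpa using hg.add hr
  have hcond := hQg.map_shiftFst hg.measurable (hg.integrable_comp measurable_snd)
    ((measurable_leftRamp c k).const_mul d) (hr.integrable_comp measurable_snd)
  have hX := hf.map_shiftFst ((measurable_leftRamp c k).const_mul d)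
  exact ⟨⟨⟨f, hX⟩, _, _, _, hjump, hcond⟩, hjump, hcond⟩

lemma tendsto_shiftFst_leftRamp (c d : ℝ) (z : ℝ × ℝ) :
    Tendsto (fun k => shiftFst (fun x => d * leftRamp c k x) z) atTop (𝓝 z) := by
  have h := (tendsto_const_nhds (x := z.1)).add
    ((tendsto_leftRamp_atTop c z.2).const_mul d)
  simpa [shiftFst] using h.prodMk_nhds tendsto_const_nhds

section Test

variable {E : Type*} [MeasurableSpace E] {n : ℕ}

instance (P : ProbabilityMeasure E) : IsProbabilityMeasure (sampleDist n P) := by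
  unfold sampleDist; infer_instance

lemma IsTest.integrable_s14 {φ : E → ℝ} (hφ : IsTest φ) (ν : Measure E) [IsFiniteMeasure ν] :
    Integrable φ ν :=
  .of_bound hφ.1.aestronglyMeasurable 1 (ae_of_all _ fun z => by
    rw [Real.norm_eq_abs, abs_le]; constructor <;> linarith [(hφ.2 z).1, (hφ.2 z).2])

lemma tpower_mem_Icc {φ : (Fin n → E) → ℝ} (hφ : IsTest φ) (P : ProbabilityMeasure E) :
    tpower n P φ ∈ Icc 0 1 :=
  ⟨integral_nonneg fun z => (hφ.2 z).1, by
    simpa [tpower] using integral_mono (hφ.integrable_s14 (sampleDist n P)) (integrable_const 1)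
      fun z => (hφ.2 z).2⟩

lemma sampleDist_map (P : ProbabilityMeasure E) {T : E → E} (hT : Measurable T) :
    sampleDist n (P.map hT.aemeasurable) = (sampleDist n P).map fun z i => T (z i) := by
  rw [sampleDist, sampleDist, Measure.pi_map_pi fun _ => hT.aemeasurable]
  simp

theorem tendsto_tpower_map [TopologicalSpace E] {Q : ProbabilityMeasure E} {T : ℕ → E → E}
    (hT : ∀ k, Measurable (T k)) (hTz : ∀ z, Tendsto (fun k => T k z) atTop (𝓝 z))
    {φ : (Fin n → E) → ℝ} (hφ : IsTest φ) (hφQ : ASCont n Q φ) :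
    Tendsto (fun k => tpower n (Q.map (hT k).aemeasurable) φ) atTop (𝓝 (tpower n Q φ)) := by
  have hF : ∀ k, Measurable fun (z : Fin n → E) i => T k (z i) :=
    fun k => measurable_pi_lambda _ fun i => (hT k).comp (measurable_pi_apply i)
  simp only [tpower, sampleDist_map _ (hT _), integral_map (hF _).aemeasurable
    hφ.1.aestronglyMeasurable]
  refine tendsto_integral_of_dominated_convergence (fun _ => 1)
    (fun k => (hφ.1.comp (hF k)).aestronglyMeasurable) (integrable_const 1)
    (fun k => ae_of_all _ fun z => ?_) ?_
  · rw [Real.norm_eq_abs, abs_le]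
    constructor <;> linarith [(hφ.2 (fun i => T k (z i))).1, (hφ.2 (fun i => T k (z i))).2]
  · filter_upwards [ae_iff.2 hφQ] with z hz
    exact hz.tendsto.comp (tendsto_pi_nhds.2 fun i => hTz (z i))

end Test

theorem rdd_power_limited_by_size_general (n : ℕ) (c : ℝ)
    (μ : ProbabilityMeasure (ℝ × ℝ) → ℝ)
    (hμ : ∀ (P : ProbabilityMeasure (ℝ × ℝ)) (g : ℝ → ℝ) (gp gm : ℝ),
      MemRDD c P → JumpFun c g gp gm → CondMeanEq P g → μ P = gp - gm)
    (m : ℝ) (φ : (Fin n → ℝ × ℝ) → ℝ) (hφ : IsTest φ)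
    (hcont : ∀ Q : ProbabilityMeasure (ℝ × ℝ), MemRDD c Q → μ Q ≠ m → ASCont n Q φ) :
    sSup ((fun Q => tpower n Q φ) '' {Q | MemRDD c Q ∧ μ Q ≠ m}) ≤
      sSup ((fun P => tpower n P φ) '' {P | MemRDD c P ∧ μ P = m}) := by
  have hbdd : BddAbove ((fun P => tpower n P φ) '' {P | MemRDD c P ∧ μ P = m}) :=
    ⟨1, by rintro _ ⟨P, -, rfl⟩; exact (tpower_mem_Icc hφ P).2⟩
  refine Real.sSup_le ?_ (Real.sSup_nonneg ?_)
  · rintro _ ⟨Q, ⟨hQ, hQm⟩, rfl⟩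
    obtain ⟨⟨f, hf⟩, g, gp, gm, hg, hQg⟩ := hQ
    have hnull : ∀ k, MemRDD c (rampShift Q c (gp - gm - m) k) ∧
        μ (rampShift Q c (gp - gm - m) k) = m := fun k => by
      obtain ⟨hmem, hjump, hcond⟩ := memRDD_rampShift hf hg hQg (gp - gm - m) k
      exact ⟨hmem, by rw [hμ _ _ _ _ hmem hjump hcond]; ring⟩
    have hlim := tendsto_tpower_map
      (fun k => measurable_shiftFst ((measurable_leftRamp c k).const_mul _))
      (tendsto_shiftFst_leftRamp c (gp - gm - m)) hφ
      (hcont Q ⟨⟨f, hf⟩, g, gp, gm, hg, hQg⟩ hQm)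
    exact le_of_tendsto hlim (.of_forall fun k => le_csSup hbdd ⟨_, hnull k, rfl⟩)
  · rintro _ ⟨P, -, rfl⟩
    exact (tpower_mem_Icc hφ P).1

/-- Corollary 1(i), RDD testing impossibility: for every `m`, any test of
`H₀ : μ(P) = m` against `H₁ : μ(P) ≠ m` that is a.s. continuous under every alternative has
power limited by size. -/
theorem rdd_power_limited_by_size (n : ℕ) (hn : 1 ≤ n) (c : ℝ)
    (μ : ProbabilityMeasure (ℝ × ℝ) → ℝ)
    (hμ : ∀ (P : ProbabilityMeasure (ℝ × ℝ)) (g : ℝ → ℝ) (gp gm : ℝ),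
      MemRDD c P → JumpFun c g gp gm → CondMeanEq P g → μ P = gp - gm)
    (m : ℝ) (φ : (Fin n → ℝ × ℝ) → ℝ) (hφ : IsTest φ)
    (hcont : ∀ Q : ProbabilityMeasure (ℝ × ℝ), MemRDD c Q → μ Q ≠ m → ASCont n Q φ) :
    sSup ((fun Q => tpower n Q φ) '' {Q | MemRDD c Q ∧ μ Q ≠ m}) ≤
      sSup ((fun P => tpower n P φ) '' {P | MemRDD c P ∧ μ P = m}) :=
  rdd_power_limited_by_size_general n c μ hμ m φ hφ hcont
end
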